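/- arXiv:2012.02183 — 2 statements merged into one kernel-verified Lean document; each statement's English description precedes it below -/
import Mathlib

section
/- Let q ≥ 2, n ≥ 2, and let f : V(H(n,q)) → ℂ be a function with f ≢ 0 satisfying Af = λ·f for a scalar λ ≠ −n, where A is the adjacency operator of H(n,q). Then there exists a coordinate i ∈ {1,…,n} such that the function f *_i ψ on H(n−1,q), defined by (f *_i ψ)(x) = Σ_{a ∈ ZMod q} f(x^a_i), is not identically zero. -/
/-!
The neighbours of `x` in `H(n,q)` are partitioned by the `n` lines `{x with coordinate i changed}`
through `x`. If every `f *ᵢ ψ` vanished, the sum of `f` over each such line would be `0`, so the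
neighbours on it would contribute `-f x` to `(A f)(x)`. Then `A f = -n f`, and since `f ≢ 0`
this forces `λ = -n`.
-/

open Finset

/-- Vertex set of the Hamming graph `H(n,q)`: `q`-ary words of length `n`. -/
abbrev HV (n q : ℕ) : Type := Fin n → ZMod q

/-- The radius-`r` sphere around `x` in `H(n,q)`. -/
def hSphere {n q : ℕ} (x : HV n q) (r : ℕ) : Set (HV n q) := {y | hammingDist x y = r}

/-- The radius-1 ball around `x` in `H(n,q)`. -/
def hBall {n q : ℕ} (x : HV n q) : Set (HV n q) := {z | hammingDist x z ≤ 1}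

/-- A code `C` has code distance at least `d`. -/
def minDistGe {n q : ℕ} (C : Set (HV n q)) (d : ℕ) : Prop :=
  ∀ x ∈ C, ∀ y ∈ C, x ≠ y → d ≤ hammingDist x y

/-- A pair of disjoint sets is a perfect bitrade in `H(n,q)` if every radius-1 ball
meets both parts in the same number (at most 1) of vertices. -/
def isPerfectBitrade {n q : ℕ} (Tp Tm : Set (HV n q)) : Prop :=
  Disjoint Tp Tm ∧ ∀ x : HV n q,
    (hBall x ∩ Tp).ncard = (hBall x ∩ Tm).ncard ∧ (hBall x ∩ Tp).ncard ≤ 1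

/-- The weight of a vertex `x` with respect to a set `A`:
`|S₀(x) ∩ A| + |S₁(x) ∩ A| + (2/n)·|S₂(x) ∩ A|`. -/
noncomputable def wt {n q : ℕ} (A : Set (HV n q)) (x : HV n q) : ℚ :=
  ((hSphere x 0 ∩ A).ncard : ℚ) + ((hSphere x 1 ∩ A).ncard : ℚ)
    + (2 / (n : ℚ)) * ((hSphere x 2 ∩ A).ncard : ℚ)

/-- Definition 3 (weight definition of extended perfect bitrade). -/
def weightBitrade {n q : ℕ} (Tp Tm : Set (HV n q)) : Prop :=
  Disjoint Tp Tm ∧ ∀ x : HV n q, wt Tp x = wt Tm x ∧ wt Tp x ≤ 1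

/-- 0-1 indicator function of a set of vertices. -/
noncomputable def chi {n q : ℕ} (T : Set (HV n q)) (x : HV n q) : ℝ :=
  Set.indicator T (fun _ => (1 : ℝ)) x

/-- The adjacency operator of `H(n,q)`: sum of `f` over the neighbours of `x`. -/
def nbrSum {n q : ℕ} [NeZero q] {R : Type*} [AddCommMonoid R]
    (f : HV n q → R) (x : HV n q) : R :=
  ∑ y ∈ Finset.univ.filter (fun y => hammingDist x y = 1), f y

/-- The `i`-projection of a code `C ⊆ V(H(m+1,q))`. -/
def proj {m q : ℕ} (i : Fin (m + 1)) (C : Set (HV (m + 1) q)) : Set (HV m q) :=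
  {x | ∃ a : ZMod q, i.insertNth a x ∈ C}

/-- Definition 2 (projection definition of extended perfect bitrade). -/
def projBitrade {m q : ℕ} (Tp Tm : Set (HV (m + 1) q)) : Prop :=
  minDistGe Tp 4 ∧ minDistGe Tm 4 ∧
    ∀ i : Fin (m + 1),
      isPerfectBitrade (proj i Tp \ proj i Tm) (proj i Tm \ proj i Tp)

/-- `f *ᵢ ψ`, where `ψ ≡ 1`: the function `x ↦ ∑ₐ f(xᵃᵢ)` on `H(m,q)`. -/
noncomputable def projFun {m q : ℕ} [NeZero q] (i : Fin (m + 1)) (f : HV (m + 1) q → ℂ)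
    (x : HV m q) : ℂ :=
  ∑ a : ZMod q, f (i.insertNth a x)

/-- The cylinder `C_{x,i} = ⋃ₐ B(x + a·eᵢ)`. -/
def cylinder {n q : ℕ} (x : HV n q) (i : Fin n) : Set (HV n q) :=
  ⋃ a : ZMod q, hBall (Function.update x i (x i + a))

/-- Definition 5 (cylinder definition of extended perfect bitrade). -/
def cylBitrade {n q : ℕ} (Tp Tm : Set (HV n q)) : Prop :=
  ∀ (x : HV n q) (i : Fin n),
    (cylinder x i ∩ Tp).ncard = (cylinder x i ∩ Tm).ncard ∧
      (cylinder x i ∩ Tp).ncard ≤ 1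

/-- The matrix `S` from Definition 1. -/
noncomputable def Smat (n q : ℕ) : Matrix (Fin 3) (Fin 3) ℝ :=
  !![0, (n : ℝ) * ((q : ℝ) - 1), 0;
     1, (q : ℝ) - 2, ((n : ℝ) - 1) * ((q : ℝ) - 1);
     0, (n : ℝ), (n : ℝ) * ((q : ℝ) - 2)]

/-- Definition 1 (matrix definition of extended perfect bitrade), existence of the
matrix `F` with the required properties. -/
def matrixBitrade {n q : ℕ} [NeZero q] (Tp Tm : Set (HV n q)) : Prop :=
  ∃ F : HV n q → Fin 3 → ℝ,
    (∀ x, F x 0 = chi Tp x - chi Tm x) ∧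
    (∀ x, ∑ k : Fin 3, F x k = 0) ∧
    (∀ x, ({k : Fin 3 | F x k ≠ 0}).ncard ≤ 2) ∧
    (∀ (x : HV n q) (j : Fin 3),
      nbrSum (fun y => F y j) x = ∑ k : Fin 3, F x k * Smat n q k j)

/-- Definition 4 (spectral definition of extended perfect bitrade). -/
def spectralBitrade {n q : ℕ} [NeZero q] (Tp Tm : Set (HV n q)) : Prop :=
  minDistGe Tp 4 ∧ minDistGe Tm 4 ∧
    ∃ g h : HV n q → ℝ,
      (∀ x, chi Tp x - chi Tm x = g x + h x) ∧
      (∀ x, nbrSum g x = -(n : ℝ) * g x) ∧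
      (∀ x, nbrSum h x = ((q : ℝ) - 2) * h x)

lemma eq_and_eq_of_update_eq_update {ι α : Type*} [DecidableEq ι] {x : ι → α} {i j : ι} {a b : α}
    (ha : a ≠ x i) (h : Function.update x i a = Function.update x j b) : i = j ∧ a = b := by
  have hij : i = j := by
    by_contra hij
    exact ha (by simpa [Function.update_of_ne hij] using congrFun h i)
  subst hij
  exact ⟨rfl, by simpa using congrFun h i⟩

section Hamming

variable {ι α : Type*} [Fintype ι] [DecidableEq ι] [DecidableEq α]

lemma hammingDist_update_self {x : ι → α} {i : ι} {a : α} (ha : a ≠ x i) :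
    hammingDist x (Function.update x i a) = 1 := by
  have : ({j | x j ≠ Function.update x i a j} : Finset ι) = {i} := by
    ext j
    by_cases hj : j = i
    · subst hj; simpa using ha.symm
    · simp [hj]
  rw [hammingDist, this, card_singleton]

lemma exists_eq_update_of_hammingDist_eq_one {x y : ι → α} (h : hammingDist x y = 1) :
    ∃ i, y i ≠ x i ∧ Function.update x i (y i) = y := by
  obtain ⟨i, hi⟩ := card_eq_one.mp h
  have hdiff : ∀ j, x j ≠ y j ↔ j = i := fun j => by
    simpa using congrArg (j ∈ ·) hi
  refine ⟨i, fun e => (hdiff i).2 rfl e.symm, funext fun j => ?_⟩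
  by_cases hj : j = i
  · subst hj; simp
  · simpa [hj] using (hdiff j).not.2 hj

end Hamming

lemma nbrSum_eq_sum_sum_erase {n q : ℕ} [NeZero q] {R : Type*} [AddCommMonoid R]
    (f : HV n q → R) (x : HV n q) :
    nbrSum f x = ∑ i, ∑ a ∈ univ.erase (x i), f (Function.update x i a) := by
  rw [nbrSum, sum_sigma']
  refine (sum_bij (fun p _ => Function.update x p.1 p.2) ?_ ?_ ?_ (fun _ _ => rfl)).symm
  · rintro ⟨i, a⟩ hp
    simpa using hammingDist_update_self (mem_erase.mp (mem_sigma.mp hp).2).1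
  · rintro ⟨i, a⟩ hp ⟨j, b⟩ - h
    obtain ⟨rfl, rfl⟩ := eq_and_eq_of_update_eq_update (mem_erase.mp (mem_sigma.mp hp).2).1 h
    rfl
  · intro y hy
    obtain ⟨i, hne, hy⟩ := exists_eq_update_of_hammingDist_eq_one (mem_filter.mp hy).2
    exact ⟨⟨i, y i⟩, by simpa using hne, hy⟩

lemma sum_update_eq_projFun {m q : ℕ} [NeZero q] (f : HV (m + 1) q → ℂ) (x : HV (m + 1) q)
    (i : Fin (m + 1)) : ∑ a, f (Function.update x i a) = projFun i f (i.removeNth x) := by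
  simp [projFun]

lemma nbrSum_eq_neg_mul_of_projFun_eq_zero {m q : ℕ} [NeZero q] {f : HV (m + 1) q → ℂ}
    (hproj : ∀ i x, projFun i f x = 0) (x : HV (m + 1) q) :
    nbrSum f x = -((m + 1 : ℕ) : ℂ) * f x := by
  have hline : ∀ i, ∑ a ∈ univ.erase (x i), f (Function.update x i a) = -f x := fun i => by
    have := add_sum_erase univ (fun a => f (Function.update x i a)) (mem_univ (x i))
    rw [sum_update_eq_projFun, hproj, Function.update_eq_self] at this
    linear_combination this
  simp only [nbrSum_eq_sum_sum_erase, hline, sum_const, card_univ, Fintype.card_fin]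
  push_cast
  ring

theorem stmt7_general (q m : ℕ) [NeZero q]
    (f : HV (m + 1) q → ℂ) (hf : f ≠ 0) (lam : ℂ) (hlam : lam ≠ -((m + 1 : ℕ) : ℂ))
    (heig : ∀ x, nbrSum f x = lam * f x) :
    ∃ i : Fin (m + 1), ∃ x : HV m q, projFun i f x ≠ 0 := by
  by_contra! hproj
  obtain ⟨x, hx⟩ := Function.ne_iff.mp hf
  have hmul : (lam + ((m + 1 : ℕ) : ℂ)) * f x = 0 := by
    linear_combination (heig x).symm.trans (nbrSum_eq_neg_mul_of_projFun_eq_zero hproj x)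
  exact hlam (eq_neg_of_add_eq_zero_left ((mul_eq_zero.mp hmul).resolve_right hx))

/-- here `n = m + 1 ≥ 2`: if `f ≢ 0` is a `λ`-eigenfunction of `H(n,q)`
with `λ ≠ -n`, then `f *ᵢ ψ ≢ 0` for some coordinate `i`. -/
theorem stmt7 (q m : ℕ) [NeZero q] (hq : 2 ≤ q) (hm : 1 ≤ m)
    (f : HV (m + 1) q → ℂ) (hf : f ≠ 0) (lam : ℂ) (hlam : lam ≠ -((m + 1 : ℕ) : ℂ))
    (heig : ∀ x, nbrSum f x = lam * f x) :
    ∃ i : Fin (m + 1), ∃ x : HV m q, projFun i f x ≠ 0 :=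
  stmt7_general q m f hf lam hlam heig
end

section
/- Let q ≥ 3 and n ≥ 2. If a pair (T⁺, T⁻) of disjoint subsets of V(H(n,q)) satisfies the spectral definition of extended perfect bitrade (Definition 4), then it satisfies the projection definition (Definition 2): T⁺ and T⁻ have code distance at least 4 and for every coordinate i the i-projection of (T⁺, T⁻) is a perfect bitrade in H(n−1,q). -/
open Finset

/-!
Summing a function over the `i`-th coordinate, `f ↦ (x ↦ ∑ₐ f(xᵃᵢ))`, intertwines the
adjacency operators of `H(m+1,q)` and `H(m,q)` up to a shift by `q - 1` of the eigenvalues.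
Hence the `-(m+1)`-component `g` of `χ_{T⁺} - χ_{T⁻}` projects to an eigenfunction with
eigenvalue `-m - q < -m`, below the spectrum of `H(m,q)`, so it vanishes, while the
`(q-2)`-component projects to a `(-1)`-eigenfunction. Code distance 4 makes the coordinate sum
of `χ_T` the indicator of the projection of `T`, and makes each projection meet every ball at
most once; a `(-1)`-eigenfunction sums to zero over every ball, which gives the bitrade
condition.
-/

theorem hammingDist_insertNth {m : ℕ} {β : Type*} [DecidableEq β] (i : Fin (m + 1))
    (a b : β) (x y : Fin m → β) :
    hammingDist (i.insertNth a x : Fin (m + 1) → β) (i.insertNth b y)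
      = (if a = b then 0 else 1) + hammingDist x y := by
  simp only [hammingDist, Finset.card_filter, Fin.sum_univ_succAbove _ i,
    Fin.insertNth_apply_same, Fin.insertNth_apply_succAbove, ne_eq, ite_not]

theorem sum_insertNth {m : ℕ} {β R : Type*} [Fintype β] [AddCommMonoid R] (i : Fin (m + 1))
    (F : (Fin (m + 1) → β) → R) :
    ∑ z, F z = ∑ a, ∑ x, F (i.insertNth a x) := by
  rw [← (Fin.insertNthEquiv (fun _ => β) i).sum_comp, Fintype.sum_prod_type]
  rfl

/-- `projFun` with coefficients in an arbitrary additive monoid. -/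
def fiberSum {m q : ℕ} [NeZero q] {R : Type*} [AddCommMonoid R] (i : Fin (m + 1))
    (g : HV (m + 1) q → R) (x : HV m q) : R :=
  ∑ a : ZMod q, g (i.insertNth a x)

theorem nbrSum_insertNth {m q : ℕ} [NeZero q] {R : Type*} [AddCommGroup R] (i : Fin (m + 1))
    (g : HV (m + 1) q → R) (a : ZMod q) (x : HV m q) :
    nbrSum g (i.insertNth a x)
      = (fiberSum i g x - g (i.insertNth a x)) + nbrSum (fun y => g (i.insertNth a y)) x := by
  have fiber (b : ZMod q) (hb : b ≠ a) :
      ∑ y : HV m q, (if hammingDist (i.insertNth a x : HV (m + 1) q) (i.insertNth b y) = 1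
        then g (i.insertNth b y) else 0) = g (i.insertNth b x) := by
    simp [hammingDist_insertNth, hb.symm, hammingDist_eq_zero]
  rw [nbrSum, Finset.sum_filter, sum_insertNth i, ← Finset.add_sum_erase _ _ (Finset.mem_univ a),
    Finset.sum_congr rfl fun b hb => fiber b (Finset.ne_of_mem_erase hb),
    Finset.sum_erase_eq_sub (Finset.mem_univ a), add_comm]
  simp [nbrSum, Finset.sum_filter, hammingDist_insertNth, fiberSum]

theorem nbrSum_fiberSum {m q : ℕ} [NeZero q] {R : Type*} [CommRing R] (i : Fin (m + 1))
    {g : HV (m + 1) q → R} {μ : R} (hg : ∀ z, nbrSum g z = μ * g z) (x : HV m q) :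
    nbrSum (fiberSum i g) x = (μ - (q - 1)) * fiberSum i g x := by
  have swap : ∑ a : ZMod q, nbrSum (fun y => g (i.insertNth a y)) x = nbrSum (fiberSum i g) x :=
    Finset.sum_comm
  have key : ∑ a : ZMod q, nbrSum g (i.insertNth a x)
      = (q - 1) * fiberSum i g x + nbrSum (fiberSum i g) x := by
    simp only [nbrSum_insertNth, Finset.sum_add_distrib, Finset.sum_sub_distrib,
      Finset.sum_const, Finset.card_univ, ZMod.card, nsmul_eq_mul, swap]
    rw [← fiberSum]
    ring
  rw [Finset.sum_congr rfl fun a _ => hg _, ← Finset.mul_sum, ← fiberSum] at key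
  linear_combination -key

/-- On each fibre `{xᵃ₀ : a}` the adjacency operator is that of `K_q`, whose least eigenvalue
is `-1`; on each layer `{xᵃ₀ : x}` it is that of `H(m,q)`. -/
theorem neg_mul_sum_sq_le_sum_mul_nbrSum {n q : ℕ} [NeZero q] (g : HV n q → ℝ) :
    -(n : ℝ) * ∑ z, g z ^ 2 ≤ ∑ z, g z * nbrSum g z := by
  induction n with
  | zero => simp [nbrSum, Finset.filter_singleton]
  | succ m ih =>
    let gₐ : ZMod q → HV m q → ℝ := fun a x => g ((0 : Fin (m + 1)).insertNth a x)
    have fiber (x : HV m q) :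
        -∑ a, gₐ a x ^ 2 ≤ ∑ a, gₐ a x * (fiberSum 0 g x - gₐ a x) := by
      have : ∑ a, gₐ a x * (fiberSum 0 g x - gₐ a x)
          = fiberSum 0 g x ^ 2 - ∑ a, gₐ a x ^ 2 := by
        simp only [mul_sub, Finset.sum_sub_distrib, ← Finset.sum_mul, fiberSum, gₐ, sq]
      nlinarith [sq_nonneg (fiberSum 0 g x)]
    calc -((m + 1 : ℕ) : ℝ) * ∑ z, g z ^ 2
        = -∑ x, ∑ a, gₐ a x ^ 2 + ∑ a, -(m : ℝ) * ∑ x, gₐ a x ^ 2 := by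
          rw [sum_insertNth 0, Finset.sum_comm, ← Finset.mul_sum, Finset.sum_comm]
          push_cast
          ring
      _ ≤ ∑ x, ∑ a, gₐ a x * (fiberSum 0 g x - gₐ a x)
            + ∑ a, ∑ x, gₐ a x * nbrSum (gₐ a) x := by
          gcongr with x _ a _
          · rw [← Finset.sum_neg_distrib]
            exact Finset.sum_le_sum fun x _ => fiber x
          · exact ih _
      _ = ∑ z, g z * nbrSum g z := by
          rw [sum_insertNth 0, Finset.sum_comm (f := fun x a => _), ← Finset.sum_add_distrib]
          simp only [nbrSum_insertNth, mul_add, Finset.sum_add_distrib, gₐ]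

theorem eq_zero_of_nbrSum_eq_mul {n q : ℕ} [NeZero q] {G : HV n q → ℝ} {μ : ℝ}
    (hμ : μ < -n) (hG : ∀ z, nbrSum G z = μ * G z) : G = 0 := by
  have bound := neg_mul_sum_sq_le_sum_mul_nbrSum G
  have eq : ∑ z, G z * nbrSum G z = μ * ∑ z, G z ^ 2 := by
    simp only [hG, Finset.mul_sum]
    exact Finset.sum_congr rfl fun z _ => by ring
  have hsum : ∑ z, G z ^ 2 = 0 := by
    nlinarith [Finset.sum_nonneg fun z (_ : z ∈ Finset.univ) => sq_nonneg (G z)]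
  funext z
  simpa using (Finset.sum_eq_zero_iff_of_nonneg fun z _ => sq_nonneg (G z)).mp hsum z
    (Finset.mem_univ z)

theorem minDistGe.mono {n q : ℕ} {C : Set (HV n q)} {d d' : ℕ} (h : minDistGe C d)
    (hd : d' ≤ d) : minDistGe C d' :=
  fun x hx y hy hxy => hd.trans (h x hx y hy hxy)

theorem minDistGe.proj {m q : ℕ} {C : Set (HV (m + 1) q)} {d : ℕ} (h : minDistGe C (d + 1))
    (i : Fin (m + 1)) : minDistGe (proj i C) d := by
  rintro x ⟨a, ha⟩ y ⟨b, hb⟩ hxy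
  have hne : (i.insertNth a x : HV (m + 1) q) ≠ i.insertNth b y := fun h =>
    hxy (Fin.insertNth_injective2 h).2
  have := h _ ha _ hb hne
  rw [hammingDist_insertNth] at this
  split_ifs at this <;> omega

theorem fiberSum_chi {m q : ℕ} [NeZero q] {T : Set (HV (m + 1) q)} (hT : minDistGe T 2)
    (i : Fin (m + 1)) : fiberSum i (chi T) = chi (proj i T) := by
  classical
  funext x
  have hfiber : {a | i.insertNth a x ∈ T}.Subsingleton := by
    intro a ha b hb
    by_contra hab
    have := hT _ ha _ hb fun h => hab (Fin.insertNth_injective2 h).1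
    rw [hammingDist_insertNth, if_neg hab, hammingDist_self] at this
    omega
  by_cases hx : x ∈ proj i T
  · obtain ⟨a, ha⟩ := hx
    rw [fiberSum, Finset.sum_eq_single a (fun b _ hb => ?_) (by simp), chi, chi,
      Set.indicator_of_mem ha, Set.indicator_of_mem (show x ∈ proj i T from ⟨a, ha⟩)]
    exact Set.indicator_of_notMem (s := T) (fun hb' => hb (hfiber hb' ha)) (fun _ => (1 : ℝ))
  · rw [fiberSum, chi, Set.indicator_of_notMem hx]
    exact Finset.sum_eq_zero fun a _ =>
      Set.indicator_of_notMem (s := T) (fun ha => hx ⟨a, ha⟩) (fun _ => (1 : ℝ))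

theorem ncard_hBall_inter {n q : ℕ} [NeZero q] (S : Set (HV n q)) (x : HV n q) :
    ((hBall x ∩ S).ncard : ℝ) = chi S x + nbrSum (chi S) x := by
  classical
  have hball : Finset.univ.filter (fun y => hammingDist x y ≤ 1)
      = insert x (Finset.univ.filter fun y => hammingDist x y = 1) := by
    ext y
    simp [Nat.le_one_iff_eq_zero_or_eq_one, eq_comm]
  have hset : hBall x ∩ S = ↑({y | hammingDist x y ≤ 1 ∧ y ∈ S} : Finset (HV n q)) := by
    ext y
    simp [hBall]
  rw [hset, Set.ncard_coe_finset, ← Finset.filter_filter, Finset.natCast_card_filter, hball,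
    Finset.sum_insert (by simp), nbrSum]
  simp only [chi, Set.indicator_apply]

theorem ncard_hBall_inter_eq_of_nbrSum_eq_neg {n q : ℕ} [NeZero q] {P M : Set (HV n q)}
    (h : ∀ x, nbrSum (fun y => chi P y - chi M y) x = -(chi P x - chi M x)) (x : HV n q) :
    (hBall x ∩ P).ncard = (hBall x ∩ M).ncard := by
  have hx := h x
  rw [nbrSum, Finset.sum_sub_distrib, ← nbrSum, ← nbrSum] at hx
  have : ((hBall x ∩ P).ncard : ℝ) = (hBall x ∩ M).ncard := by
    rw [ncard_hBall_inter, ncard_hBall_inter]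
    linarith
  exact_mod_cast this

theorem ncard_hBall_inter_le_one {n q : ℕ} [NeZero q] {C : Set (HV n q)} (hC : minDistGe C 3)
    (x : HV n q) : (hBall x ∩ C).ncard ≤ 1 := by
  rw [Set.ncard_le_one (Set.toFinite _)]
  rintro y ⟨hy, hyC⟩ z ⟨hz, hzC⟩
  by_contra hyz
  have := hC y hyC z hzC hyz
  have := hammingDist_triangle y x z
  rw [hammingDist_comm y x] at this
  simp only [hBall, Set.mem_ofPred_eq] at hy hz
  omega

theorem isPerfectBitrade_sdiff {n q : ℕ} [NeZero q] {P M : Set (HV n q)} (hP : minDistGe P 3)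
    (h : ∀ x, (hBall x ∩ P).ncard = (hBall x ∩ M).ncard) :
    isPerfectBitrade (P \ M) (M \ P) := by
  refine ⟨disjoint_sdiff_sdiff, fun x => ?_⟩
  rw [Set.inter_sdiff_distrib_left, Set.inter_sdiff_distrib_left]
  exact ⟨(Set.ncard_eq_ncard_iff_ncard_sdiff_eq_ncard_sdiff (Set.toFinite _) (Set.toFinite _)).mp
      (h x),
    (Set.ncard_le_ncard Set.sdiff_subset (Set.toFinite _)).trans (ncard_hBall_inter_le_one hP x)⟩

theorem spectralBitrade.nbrSum_chi_proj_sub {m q : ℕ} [NeZero q] {Tp Tm : Set (HV (m + 1) q)}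
    (h : spectralBitrade Tp Tm) (i : Fin (m + 1)) (x : HV m q) :
    nbrSum (fun y => chi (proj i Tp) y - chi (proj i Tm) y) x
      = -(chi (proj i Tp) x - chi (proj i Tm) x) := by
  obtain ⟨hTp, hTm, g, e, hf, hg, he⟩ := h
  have hq : (1 : ℝ) ≤ q := by exact_mod_cast NeZero.one_le
  have hg0 : fiberSum i g = 0 :=
    eq_zero_of_nbrSum_eq_mul (by push_cast; linarith) (nbrSum_fiberSum i hg)
  have hproj : (fun y => chi (proj i Tp) y - chi (proj i Tm) y) = fiberSum i e := by
    funext y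
    rw [← fiberSum_chi (hTp.mono (by norm_num)), ← fiberSum_chi (hTm.mono (by norm_num))]
    have hgy := congrFun hg0 y
    simp only [fiberSum, Pi.zero_apply] at hgy ⊢
    rw [← Finset.sum_sub_distrib]
    simp only [hf, Finset.sum_add_distrib, hgy, zero_add]
  rw [hproj, nbrSum_fiberSum i he, ← congrFun hproj x]
  ring

theorem stmt12_general (q m : ℕ) [NeZero q]
    (Tp Tm : Set (HV (m + 1) q))
    (h : spectralBitrade Tp Tm) :
    projBitrade Tp Tm :=
  ⟨h.1, h.2.1, fun i => isPerfectBitrade_sdiff (h.1.proj i)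
    (ncard_hBall_inter_eq_of_nbrSum_eq_neg (h.nbrSum_chi_proj_sub i))⟩

/-- here `n = m + 1 ≥ 2`: the spectral definition (Definition 4) implies
the projection definition (Definition 2). -/
theorem stmt12 (q m : ℕ) [NeZero q] (hq : 3 ≤ q) (hm : 1 ≤ m)
    (Tp Tm : Set (HV (m + 1) q)) (hdisj : Disjoint Tp Tm)
    (h : spectralBitrade Tp Tm) :
    projBitrade Tp Tm :=
  stmt12_general q m Tp Tm h
end
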